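/- Let 𝒜 have size q ≥ 2 and let f : 𝒜^n → {−1, 0, 1}. Then f is a λ₁(n,q)-eigenfunction of H(n,q) if and only if f is the all-zero function, or f is an (A,B,i)-quasi string with |A| = |B| for some i ∈ {1,…,n} and disjoint A, B ⊆ 𝒜 with A ∪ B ≠ ∅, or f is an (A,B,i,j)-quasi cross with |A| = |B| for some distinct i, j ∈ {1,…,n} and nonempty A, B ⊆ 𝒜. -/

import Mathlib

/-- `f` is a `lam`-eigenfunction of `G`: for every vertex `x` the sum of `f` over the
neighbors of `x` equals `lam * f x` (the all-zero function is allowed). -/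
def IsEigenfun {V : Type*} (G : SimpleGraph V) [Fintype V] (lam : ℝ) (f : V → ℝ) : Prop :=
  ∀ x : V, ∑ y : V, (G.neighborSet x).indicator f y = lam * f x

/-- The Hamming graph `H(n,q)` on the vertex set `𝒜ⁿ` (where `|𝒜| = q`): two vertices are
adjacent iff they differ in exactly one coordinate. -/
def hammingGraph (n : ℕ) (𝒜 : Type*) [DecidableEq 𝒜] : SimpleGraph (Fin n → 𝒜) where
  Adj x y := hammingDist x y = 1
  symm := ⟨fun x y h => by simpa [hammingDist_comm] using h⟩
  loopless := ⟨fun x h => by simp [hammingDist_self] at h⟩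

open scoped Classical in
/-- The `(A,B,i)`-quasi string: value `1` if `x i ∈ A`, value `-1` if `x i ∈ B`,
and `0` otherwise. -/
noncomputable def quasiString {n : ℕ} {𝒜 : Type*} (A B : Set 𝒜) (i : Fin n) :
    (Fin n → 𝒜) → ℝ :=
  fun x => if x i ∈ A then 1 else if x i ∈ B then -1 else 0

open scoped Classical in
/-- The `(A,B,i,j)`-quasi cross: value `1` if `x i ∈ A` and `x j ∉ B`, value `-1` if
`x i ∉ A` and `x j ∈ B`, and `0` otherwise. -/
noncomputable def quasiCross {n : ℕ} {𝒜 : Type*} (A B : Set 𝒜) (i j : Fin n) :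
    (Fin n → 𝒜) → ℝ :=
  fun x => if x i ∈ A ∧ x j ∉ B then 1 else if x i ∉ A ∧ x j ∈ B then -1 else 0

/-!
The `λ₁`-eigenspace of `H(n,q)` is the Efron–Stein level-one space `levelOne`: the functions
`x ↦ ∑ i, φ i (x i)` with every `φ i` of zero sum. In terms of the line sums
`lineSum i f x = ∑ a, f (update x i a)` the eigen-equation reads `∑ i, lineSum i f = q (n - 1) f`.
Level-one functions satisfy it by a direct computation. Conversely, peel off coordinates: each
`lineSum k f` satisfies the same equation with coordinate `k` removed, and `f` is a multiple of
the sum of the `lineSum k f`, unless at most one coordinate is left.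

A `{-1, 0, 1}`-valued level-one function changes by an integer along every coordinate, so each
nonzero `φ i` has range of width at least `1`, while these widths add up to `max f - min f ≤ 2`.
Hence at most two `φ i` are nonzero: one gives a quasi string, two (then each two-valued) give a
quasi cross, and the zero-sum conditions become `|A| = |B|`.
-/

open Finset Function

lemma sum_apply_update {ι 𝒜 : Type*} [Fintype ι] [DecidableEq ι] (φ : ι → 𝒜 → ℝ)
    (x : ι → 𝒜) (i : ι) (a : 𝒜) :
    ∑ j, φ j (update x i a j) = ∑ j, φ j (x j) - φ i (x i) + φ i a := by
  simp_rw [apply_update φ x i a]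
  rw [sum_update_of_mem (mem_univ i), ← add_sum_erase _ _ (mem_univ i), sdiff_singleton_eq_erase]
  ring

section LineSum

variable {ι 𝒜 : Type*} [DecidableEq ι] [Fintype 𝒜]

def lineSum (i : ι) : ((ι → 𝒜) → ℝ) →ₗ[ℝ] (ι → 𝒜) → ℝ where
  toFun f x := ∑ a, f (update x i a)
  map_add' f g := by ext x; simp [sum_add_distrib]
  map_smul' c f := by ext x; simp [mul_sum]

lemma lineSum_apply (i : ι) (f : (ι → 𝒜) → ℝ) (x : ι → 𝒜) :
    lineSum i f x = ∑ a, f (update x i a) := rfl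

lemma lineSum_lineSum_self (i : ι) (f : (ι → 𝒜) → ℝ) :
    lineSum i (lineSum i f) = (Fintype.card 𝒜 : ℝ) • lineSum i f := by
  ext x
  simp [lineSum_apply]

lemma lineSum_comm {i j : ι} (h : i ≠ j) (f : (ι → 𝒜) → ℝ) :
    lineSum i (lineSum j f) = lineSum j (lineSum i f) := by
  ext x
  simp only [lineSum_apply]
  rw [sum_comm]
  simp_rw [update_comm h]

lemma DependsOn.lineSum {f : (ι → 𝒜) → ℝ} {S : Set ι} (hf : DependsOn f S) (i : ι) :
    DependsOn (lineSum i f) (S \ {i}) := by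
  intro x y hxy
  refine sum_congr rfl fun a _ => hf fun j hj => ?_
  by_cases hji : j = i
  · simp [hji]
  · simp [update_of_ne hji, hxy j ⟨hj, hji⟩]

lemma sum_erase_lineSum_lineSum {S : Finset ι} {f : (ι → 𝒜) → ℝ} {c : ℝ}
    (heig : ∑ i ∈ S, lineSum i f = c • f) {k : ι} (hk : k ∈ S) :
    ∑ i ∈ S.erase k, lineSum i (lineSum k f) = (c - Fintype.card 𝒜) • lineSum k f := by
  have h := congrArg (lineSum k) heig
  rw [map_sum, map_smul, ← add_sum_erase _ _ hk, lineSum_lineSum_self] at h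
  rw [sub_smul, ← h, sum_congr rfl fun i hi => lineSum_comm (ne_of_mem_erase hi) f]
  abel

end LineSum

section LevelOne

variable {ι 𝒜 : Type*} [Fintype ι] [DecidableEq ι] [Fintype 𝒜]

def levelOne : Submodule ℝ ((ι → 𝒜) → ℝ) where
  carrier := {f | ∃ φ : ι → 𝒜 → ℝ, (∀ i, ∑ a, φ i a = 0) ∧ ∀ x, f x = ∑ i, φ i (x i)}
  add_mem' := by
    rintro f g ⟨φ, hφ, hf⟩ ⟨ψ, hψ, hg⟩
    exact ⟨φ + ψ, fun i => by simp [sum_add_distrib, hφ, hψ],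
      fun x => by simp [hf, hg, sum_add_distrib]⟩
  zero_mem' := ⟨0, by simp, by simp⟩
  smul_mem' := by
    rintro c f ⟨φ, hφ, hf⟩
    exact ⟨c • φ, fun i => by simp [← mul_sum, hφ], fun x => by simp [hf, mul_sum]⟩

lemma comp_eval_mem_levelOne {g : 𝒜 → ℝ} (hg : ∑ a, g a = 0) (i : ι) :
    (fun x : ι → 𝒜 => g (x i)) ∈ levelOne := by
  refine ⟨Pi.single i g, fun j => ?_, fun x => ?_⟩
  · by_cases h : j = i
    · subst h; simpa
    · simp [h]
  · rw [sum_eq_single i (fun j _ hj => by simp [hj]) (by simp)]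
    simp

lemma sum_lineSum_of_mem_levelOne {f : (ι → 𝒜) → ℝ} (hf : f ∈ levelOne) :
    ∑ i, lineSum i f = ((Fintype.card 𝒜 : ℝ) * (Fintype.card ι - 1)) • f := by
  obtain ⟨φ, hφ, hfφ⟩ := hf
  have hline : ∀ i x, lineSum i f x = Fintype.card 𝒜 * (f x - φ i (x i)) := by
    intro i x
    simp only [lineSum_apply, hfφ, sum_apply_update, sum_add_distrib, hφ, sum_const,
      card_univ, nsmul_eq_mul]
    ring
  ext x
  simp only [Finset.sum_apply, hline, ← mul_sum, sum_sub_distrib, ← hfφ, sum_const, card_univ,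
    nsmul_eq_mul, Pi.smul_apply, smul_eq_mul]
  ring

lemma mem_levelOne_of_dependsOn_singleton [Nonempty 𝒜] {f : (ι → 𝒜) → ℝ} {i : ι}
    (hdep : DependsOn f {i}) (hline : lineSum i f = 0) : f ∈ levelOne := by
  obtain ⟨a⟩ := ‹Nonempty 𝒜›
  have hf : f = fun x => f (update (fun _ => a) i (x i)) :=
    funext fun x => hdep fun j hj => by simp_all
  rw [hf]
  exact comp_eval_mem_levelOne (congrFun hline _) i

lemma mem_levelOne_of_sum_lineSum [Nonempty 𝒜] (S : Finset ι) {f : (ι → 𝒜) → ℝ}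
    (hdep : DependsOn f S)
    (heig : ∑ i ∈ S, lineSum i f = ((Fintype.card 𝒜 : ℝ) * (#S - 1)) • f) :
    f ∈ levelOne := by
  induction S using Finset.strongInduction generalizing f with
  | H S ih =>
  have hq : (0 : ℝ) < Fintype.card 𝒜 := by exact_mod_cast Fintype.card_pos
  obtain hS | hS | hS : #S = 0 ∨ #S = 1 ∨ 2 ≤ #S := by omega
  · obtain rfl := card_eq_zero.mp hS
    have hf : f = 0 := by simpa [hq.ne'] using heig.symm
    exact hf ▸ zero_mem _
  · obtain ⟨i, rfl⟩ := card_eq_one.mp hS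
    exact mem_levelOne_of_dependsOn_singleton (by simpa using hdep) (by simpa using heig)
  · have hc : (Fintype.card 𝒜 : ℝ) * (#S - 1) ≠ 0 := by
      have : (2 : ℝ) ≤ #S := by exact_mod_cast hS
      exact mul_ne_zero hq.ne' (by linarith)
    have hmem : ∀ k ∈ S, lineSum k f ∈ levelOne := fun k hk =>
      ih (S.erase k) (erase_ssubset hk) (by simpa using hdep.lineSum k) <| by
        rw [sum_erase_lineSum_lineSum heig hk, card_erase_of_mem hk,
          Nat.cast_sub (by omega)]
        congr 1
        push_cast
        ring
    rw [← inv_smul_smul₀ hc f, ← heig]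
    exact Submodule.smul_mem _ _ (Submodule.sum_mem _ hmem)

lemma sum_lineSum_eq_iff_mem_levelOne [Nonempty 𝒜] {f : (ι → 𝒜) → ℝ} :
    ∑ i, lineSum i f = ((Fintype.card 𝒜 : ℝ) * (Fintype.card ι - 1)) • f ↔ f ∈ levelOne :=
  ⟨fun h => mem_levelOne_of_sum_lineSum univ (by simpa using dependsOn_univ f) h,
    sum_lineSum_of_mem_levelOne⟩

end LevelOne

section Hamming

variable {𝒜 : Type*} [Fintype 𝒜] [DecidableEq 𝒜] {n : ℕ}

lemma hammingDist_eq_one_iff {ι : Type*} [Fintype ι] [DecidableEq ι] {β : ι → Type*}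
    [∀ i, DecidableEq (β i)] {x y : ∀ i, β i} :
    hammingDist x y = 1 ↔ ∃ i, x i ≠ y i ∧ update x i (y i) = y := by
  rw [hammingDist, card_eq_one]
  constructor
  · rintro ⟨i, hi⟩
    have hdiff : ∀ j, x j ≠ y j ↔ j = i := fun j => by
      simpa using congrArg (j ∈ ·) hi
    refine ⟨i, (hdiff i).2 rfl, funext fun j => ?_⟩
    by_cases hj : j = i
    · subst hj; simp
    · rw [update_of_ne hj]
      exact not_not.mp fun h => hj ((hdiff j).1 h)
  · rintro ⟨i, hi, hy⟩
    refine ⟨i, ext fun j => ?_⟩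
    by_cases hj : j = i
    · simp [hj, hi]
    · have hxy := congrFun hy j
      rw [update_of_ne hj] at hxy
      simp [hj, hxy]

lemma sum_indicator_neighborSet_hammingGraph (f : (Fin n → 𝒜) → ℝ) (x : Fin n → 𝒜) :
    ∑ y, ((hammingGraph n 𝒜).neighborSet x).indicator f y = ∑ i, (lineSum i f x - f x) := by
  classical
  have hline : ∀ i, lineSum i f x - f x = ∑ a ∈ univ.erase (x i), f (update x i a) := by
    intro i
    rw [lineSum_apply, ← add_sum_erase _ _ (mem_univ (x i)), update_eq_self]
    ring
  simp only [hline, Set.indicator_apply, SimpleGraph.mem_neighborSet, ← sum_filter, sum_sigma']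
  symm
  refine sum_nbij (fun p => update x p.1 p.2) ?_ ?_ ?_ fun _ _ => rfl
  · rintro ⟨i, a⟩ h
    simp only [mem_sigma, mem_univ, mem_erase, true_and] at h
    simp only [mem_filter, mem_univ, true_and]
    exact hammingDist_eq_one_iff.mpr ⟨i, by simpa using Ne.symm h.1, by simp⟩
  · rintro ⟨i, a⟩ hia ⟨j, b⟩ - h
    simp only [coe_sigma, Set.mem_sigma_iff, mem_coe, mem_univ, mem_erase, true_and] at hia h
    obtain rfl : i = j := by
      by_contra hij
      have hi := congrFun h i
      rw [update_self, update_of_ne hij] at hi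
      exact hia.1 hi
    obtain rfl : a = b := by simpa using congrFun h i
    rfl
  · intro y hy
    obtain ⟨i, hi, hy⟩ := hammingDist_eq_one_iff.mp (mem_filter.mp hy).2
    exact ⟨⟨i, y i⟩, by simpa using Ne.symm hi, hy⟩

lemma isEigenfun_hammingGraph_iff {lam : ℝ} {f : (Fin n → 𝒜) → ℝ} :
    IsEigenfun (hammingGraph n 𝒜) lam f ↔ ∑ i, lineSum i f = (lam + n) • f := by
  simp only [IsEigenfun, sum_indicator_neighborSet_hammingGraph, funext_iff, Finset.sum_apply,
    Pi.smul_apply, smul_eq_mul, sum_sub_distrib, sum_const, card_univ, Fintype.card_fin,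
    nsmul_eq_mul]
  exact forall_congr' fun x => by constructor <;> intro h <;> linarith

end Hamming

lemma abs_le_one_of_mem_signs {s : ℝ} (hs : s ∈ ({-1, 0, 1} : Set ℝ)) : |s| ≤ 1 := by
  rcases hs with rfl | rfl | rfl <;> norm_num

lemma add_one_le_of_lt_of_mem_signs {s t : ℝ} (hs : s ∈ ({-1, 0, 1} : Set ℝ))
    (ht : t ∈ ({-1, 0, 1} : Set ℝ)) (h : t < s) : t + 1 ≤ s := by
  rcases hs with rfl | rfl | rfl <;> rcases ht with rfl | rfl | rfl <;> linarith

lemma min_add_one_le_max_of_sum_eq_zero {𝒜 : Type*} [Fintype 𝒜] {g : 𝒜 → ℝ} (hg : ∑ a, g a = 0) (hg0 : g ≠ 0)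
    {a₀ a₁ : 𝒜} (h₀ : ∀ a, g a ≤ g a₀) (h₁ : ∀ a, g a₁ ≤ g a)
    (hstep : ∀ a b, g b < g a → g b + 1 ≤ g a) : g a₁ + 1 ≤ g a₀ := by
  refine hstep _ _ ((h₁ a₀).lt_of_ne fun heq => hg0 ?_)
  have hconst : ∀ a, g a = g a₁ := fun a => le_antisymm (heq ▸ h₀ a) (h₁ a)
  have hq : (Fintype.card 𝒜 : ℝ) ≠ 0 := by
    exact_mod_cast (Fintype.card_pos_iff.mpr ⟨a₀⟩).ne'
  have h : (Fintype.card 𝒜 : ℝ) * g a₁ = 0 := by simpa [hconst] using hg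
  funext a
  rw [hconst, Pi.zero_apply]
  exact (mul_eq_zero.mp h).resolve_left hq

section Classification

variable {𝒜 : Type*} [Fintype 𝒜] {n : ℕ}

lemma sum_ite_mem_eq_ncard (A : Set 𝒜) [DecidablePred (· ∈ A)] :
    ∑ a, (if a ∈ A then 1 else 0 : ℝ) = A.ncard := by
  rw [sum_boole, Set.filter_mem_univ_eq_toFinset, Set.ncard_eq_toFinset_card']

lemma quasiString_mem_levelOne {A B : Set 𝒜} (hAB : Disjoint A B) (hcard : A.ncard = B.ncard)
    (i : Fin n) : quasiString A B i ∈ levelOne := by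
  classical
  have h : quasiString A B i =
      fun x => (if x i ∈ A then 1 else 0) - (if x i ∈ B then 1 else 0) := by
    funext x
    by_cases hA : x i ∈ A
    · simp [quasiString, hA, hAB.notMem_of_mem_left hA]
    · by_cases hB : x i ∈ B <;> simp [quasiString, hA, hB]
  rw [h]
  refine comp_eval_mem_levelOne
    (g := fun a => (if a ∈ A then 1 else 0) - if a ∈ B then 1 else 0) ?_ i
  rw [sum_sub_distrib, sum_ite_mem_eq_ncard A, sum_ite_mem_eq_ncard B, hcard, sub_self]

lemma quasiCross_mem_levelOne [Nonempty 𝒜] {A B : Set 𝒜} (hcard : A.ncard = B.ncard)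
    (i j : Fin n) : quasiCross A B i j ∈ levelOne := by
  classical
  have hq : (Fintype.card 𝒜 : ℝ) ≠ 0 := by exact_mod_cast Fintype.card_ne_zero
  set c : ℝ := A.ncard / Fintype.card 𝒜
  have h : quasiCross A B i j = (fun x => (if x i ∈ A then 1 else 0) - c) +
      fun x => c - (if x j ∈ B then 1 else 0) := by
    funext x
    rw [Pi.add_apply, sub_add_sub_cancel]
    by_cases hA : x i ∈ A <;> by_cases hB : x j ∈ B <;> simp [quasiCross, hA, hB]
  rw [h]
  refine add_mem (comp_eval_mem_levelOne (g := fun a => (if a ∈ A then 1 else 0) - c) ?_ i)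
    (comp_eval_mem_levelOne (g := fun b => c - if b ∈ B then 1 else 0) ?_ j)
  · rw [sum_sub_distrib, sum_ite_mem_eq_ncard A, sum_const, card_univ, nsmul_eq_mul,
      mul_div_cancel₀ _ hq, sub_self]
  · rw [sum_sub_distrib, sum_ite_mem_eq_ncard B, sum_const, card_univ, nsmul_eq_mul,
      mul_div_cancel₀ _ hq, hcard, sub_self]

lemma exists_quasiString {g : 𝒜 → ℝ} (hg : ∑ a, g a = 0) (hg0 : g ≠ 0)
    (hval : ∀ a, g a ∈ ({-1, 0, 1} : Set ℝ)) (i : Fin n) :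
    ∃ A B : Set 𝒜, Disjoint A B ∧ (A ∪ B).Nonempty ∧ A.ncard = B.ncard ∧
      (fun x => g (x i)) = quasiString A B i := by
  set A := univ.filter fun a => g a = 1
  set B := univ.filter fun a => g a = -1
  have hval' (a : 𝒜) : g a = -1 ∨ g a = 0 ∨ g a = 1 := hval a
  have hgAB : ∀ a, g a = (if g a = 1 then 1 else 0) - (if g a = -1 then 1 else 0) := fun a => by
    rcases hval' a with h | h | h <;> norm_num [h]
  refine ⟨↑A, ↑B, ?_, ?_, ?_, ?_⟩
  · exact disjoint_coe.mpr (disjoint_filter.mpr fun a _ h1 h2 => by linarith)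
  · obtain ⟨a, ha⟩ := Function.ne_iff.mp hg0
    rcases hval' a with h | h | h
    · exact ⟨a, Or.inr (by simp [B, h])⟩
    · exact absurd h ha
    · exact ⟨a, Or.inl (by simp [A, h])⟩
  · rw [sum_congr rfl fun a _ => hgAB a, sum_sub_distrib, sum_boole, sum_boole,
      sub_eq_zero] at hg
    simpa using hg
  · funext x
    rcases hval' (x i) with h | h | h <;> norm_num [quasiString, A, B, h]

lemma exists_quasiCross [Nonempty 𝒜] {g h : 𝒜 → ℝ} (hg : ∑ a, g a = 0) (hh : ∑ b, h b = 0)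
    (hg0 : g ≠ 0) (hh0 : h ≠ 0) (hval : ∀ a b, g a + h b ∈ ({-1, 0, 1} : Set ℝ))
    (i j : Fin n) :
    ∃ A B : Set 𝒜, A.Nonempty ∧ B.Nonempty ∧ A.ncard = B.ncard ∧
      (fun x => g (x i) + h (x j)) = quasiCross A B i j := by
  obtain ⟨a₀, ha₀⟩ := Finite.exists_max g
  obtain ⟨a₁, ha₁⟩ := Finite.exists_min g
  obtain ⟨b₀, hb₀⟩ := Finite.exists_max h
  obtain ⟨b₁, hb₁⟩ := Finite.exists_min h
  have hstep_g : ∀ a a', g a' < g a → g a' + 1 ≤ g a := fun a a' hlt => by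
    linarith [add_one_le_of_lt_of_mem_signs (hval a b₀) (hval a' b₀) (by linarith)]
  have hstep_h : ∀ b b', h b' < h b → h b' + 1 ≤ h b := fun b b' hlt => by
    linarith [add_one_le_of_lt_of_mem_signs (hval a₀ b) (hval a₀ b') (by linarith)]
  have hgap_g := min_add_one_le_max_of_sum_eq_zero hg hg0 ha₀ ha₁ hstep_g
  have hgap_h := min_add_one_le_max_of_sum_eq_zero hh hh0 hb₀ hb₁ hstep_h
  have htop := (abs_le.mp (abs_le_one_of_mem_signs (hval a₀ b₀))).2
  have hbot := (abs_le.mp (abs_le_one_of_mem_signs (hval a₁ b₁))).1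
  have hc : g a₁ + h b₁ = -1 := by linarith
  -- Both spans are exactly `1`, so `g` and `h` take just two values each.
  have htwo_g : ∀ a, g a = g a₁ + if g a = g a₁ + 1 then 1 else 0 := fun a => by
    rcases (ha₁ a).lt_or_eq with hlt | heq
    · have := hstep_g _ _ hlt
      rw [if_pos (by linarith [ha₀ a])]
      linarith [ha₀ a]
    · rw [← heq, if_neg (by linarith)]
      ring
  have htwo_h : ∀ b, h b = h b₁ + 1 - if h b = h b₁ then 1 else 0 := fun b => by
    rcases (hb₁ b).lt_or_eq with hlt | heq
    · have := hstep_h _ _ hlt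
      rw [if_neg hlt.ne']
      linarith [hb₀ b]
    · rw [← heq, if_pos rfl]
      ring
  set A := univ.filter fun a => g a = g a₁ + 1
  set B := univ.filter fun b => h b = h b₁
  refine ⟨↑A, ↑B, ⟨a₀, mem_coe.mpr (mem_filter.mpr ⟨mem_univ _, by linarith⟩)⟩, ⟨b₁, by simp [B]⟩, ?_, ?_⟩
  · rw [sum_congr rfl fun a _ => htwo_g a, sum_add_distrib, sum_boole] at hg
    rw [sum_congr rfl fun b _ => htwo_h b, sum_sub_distrib, sum_boole] at hh
    simp only [sum_const, card_univ, nsmul_eq_mul] at hg hh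
    have : (#A : ℝ) = #B := by linear_combination hg + hh - (Fintype.card 𝒜 : ℝ) * hc
    simpa using this
  · funext x
    rw [htwo_g, htwo_h, show ∀ s t : ℝ, g a₁ + s + (h b₁ + 1 - t) = s - t by
      intro s t; linarith]
    by_cases hA : g (x i) = g a₁ + 1 <;> by_cases hB : h (x j) = h b₁ <;>
      simp [quasiCross, A, B, hA, hB]

theorem eq_zero_or_quasiString_or_quasiCross_of_mem_levelOne [Nonempty 𝒜]
    {f : (Fin n → 𝒜) → ℝ} (hf : f ∈ levelOne) (hval : ∀ x, f x ∈ ({-1, 0, 1} : Set ℝ)) :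
    (∀ x, f x = 0) ∨
      (∃ (i : Fin n) (A B : Set 𝒜), Disjoint A B ∧ (A ∪ B).Nonempty ∧
        A.ncard = B.ncard ∧ f = quasiString A B i) ∨
      (∃ (i j : Fin n), i ≠ j ∧ ∃ A B : Set 𝒜, A.Nonempty ∧ B.Nonempty ∧
        A.ncard = B.ncard ∧ f = quasiCross A B i j) := by
  obtain ⟨φ, hφ, hfφ⟩ := hf
  choose amax hmax using fun i => Finite.exists_max (φ i)
  choose amin hmin using fun i => Finite.exists_min (φ i)
  set N := univ.filter fun i => φ i ≠ 0
  have hfN : ∀ x, f x = ∑ i ∈ N, φ i (x i) := fun x => by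
    rw [hfφ, sum_filter]
    exact sum_congr rfl fun i _ => by split_ifs with h <;> simp_all
  have hstep : ∀ i a b, φ i b < φ i a → φ i b + 1 ≤ φ i a := fun i a b hlt => by
    have := add_one_le_of_lt_of_mem_signs (hval (update amax i a)) (hval (update amax i b))
      (by simp only [hfφ, sum_apply_update]; linarith)
    simp only [hfφ, sum_apply_update] at this
    linarith
  have hgap : ∀ i ∈ N, 1 ≤ φ i (amax i) - φ i (amin i) := fun i hi => by
    linarith [min_add_one_le_max_of_sum_eq_zero (hφ i) (mem_filter.mp hi).2 (hmax i) (hmin i)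
      (hstep i)]
  have hcard : #N ≤ 2 := by
    have htop := (abs_le.mp (abs_le_one_of_mem_signs (hval amax))).2
    have hbot := (abs_le.mp (abs_le_one_of_mem_signs (hval amin))).1
    have : (#N : ℝ) ≤ 2 := calc
      (#N : ℝ) = ∑ i ∈ N, 1 := by simp
      _ ≤ ∑ i ∈ N, (φ i (amax i) - φ i (amin i)) := sum_le_sum hgap
      _ ≤ ∑ i, (φ i (amax i) - φ i (amin i)) :=
        sum_le_sum_of_subset_of_nonneg (subset_univ _) fun i _ _ => sub_nonneg.mpr (hmin i _)
      _ = f amax - f amin := by rw [hfφ, hfφ, sum_sub_distrib]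
      _ ≤ 2 := by linarith
    exact_mod_cast this
  have hne : ∀ i ∈ N, φ i ≠ 0 := fun i hi => (mem_filter.mp hi).2
  obtain hN | hN | hN : #N = 0 ∨ #N = 1 ∨ #N = 2 := by omega
  · left
    intro x
    rw [hfN, card_eq_zero.mp hN, sum_empty]
  · right; left
    obtain ⟨i, hi⟩ := card_eq_one.mp hN
    have hfi : f = fun x => φ i (x i) := funext fun x => by simp [hfN, hi]
    obtain ⟨A, B, h⟩ := exists_quasiString (hφ i) (hne i (by simp [hi]))
      (fun a => by simpa [hfi] using hval (update amax i a)) i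
    exact ⟨i, A, B, by rwa [hfi]⟩
  · right; right
    obtain ⟨i, j, hij, hN⟩ := card_eq_two.mp hN
    have hfij : f = fun x => φ i (x i) + φ j (x j) :=
      funext fun x => by rw [hfN, hN, sum_pair hij]
    obtain ⟨A, B, h⟩ := exists_quasiCross (hφ i) (hφ j) (hne i (by simp [hN]))
      (hne j (by simp [hN])) (fun a b => by
        simpa [hfij, hij] using hval (update (update amax i a) j b)) i j
    exact ⟨i, j, hij, A, B, by rwa [hfij]⟩

end Classification

/-- A function `f : 𝒜ⁿ → {-1, 0, 1}` is a `λ₁(n,q)`-eigenfunction of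
`H(n,q)` iff `f` is all-zero, or an `(A,B,i)`-quasi string with `|A| = |B|`, or an
`(A,B,i,j)`-quasi cross with `|A| = |B|`. -/
theorem stmt12 {𝒜 : Type*} [Fintype 𝒜] [DecidableEq 𝒜] (q n : ℕ)
    (hq : Fintype.card 𝒜 = q) (hq2 : 2 ≤ q)
    (f : (Fin n → 𝒜) → ℝ) (hf : ∀ x, f x ∈ ({-1, 0, 1} : Set ℝ)) :
    IsEigenfun (hammingGraph n 𝒜) (((q : ℝ) - 1) * n - q) f ↔
      ((∀ x, f x = 0) ∨
       (∃ (i : Fin n) (A B : Set 𝒜), Disjoint A B ∧ (A ∪ B).Nonempty ∧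
          A.ncard = B.ncard ∧ f = quasiString A B i) ∨
       (∃ (i j : Fin n), i ≠ j ∧ ∃ A B : Set 𝒜, A.Nonempty ∧ B.Nonempty ∧
          A.ncard = B.ncard ∧ f = quasiCross A B i j)) := by
  subst hq
  have : Nonempty 𝒜 := Fintype.card_pos_iff.mp (by omega)
  have hlam : ((Fintype.card 𝒜 : ℝ) - 1) * n - Fintype.card 𝒜 + n =
      Fintype.card 𝒜 * (Fintype.card (Fin n) - 1) := by
    rw [Fintype.card_fin]
    ring
  rw [isEigenfun_hammingGraph_iff, hlam, sum_lineSum_eq_iff_mem_levelOne]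
  refine ⟨fun h => eq_zero_or_quasiString_or_quasiCross_of_mem_levelOne h hf, ?_⟩
  rintro (h0 | ⟨i, A, B, hAB, -, hcard, rfl⟩ | ⟨i, j, -, A, B, -, -, hcard, rfl⟩)
  · exact (funext h0 : f = 0) ▸ zero_mem _
  · exact quasiString_mem_levelOne hAB hcard i
  · exact quasiCross_mem_levelOne hcard i j
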